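/- For Hermitian matrices X and Y of the same size, Tr[exp(X + Y)] ≤ Tr[exp(X) exp(Y)] (Golden–Thompson inequality). -/

import Mathlib

open Matrix
open ComplexOrder
open scoped Classical

/-- positive semidefinite square root (junk value `0` off the PSD matrices) -/
noncomputable def msqrt {n : Type*} [Fintype n] [DecidableEq n] (A : Matrix n n ℂ) :
    Matrix n n ℂ :=
  if h : A.PosSemidef then h.1.cfc Real.sqrt else 0

/-- matrix logarithm via the Hermitian functional calculus (junk value `0` otherwise) -/
noncomputable def mlog {n : Type*} [Fintype n] [DecidableEq n] (A : Matrix n n ℂ) :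
    Matrix n n ℂ :=
  if h : A.IsHermitian then h.cfc Real.log else 0

/-- matrix logarithm taken on the support (eigenvalue `0` is sent to `0`) -/
noncomputable def mlog0 {n : Type*} [Fintype n] [DecidableEq n] (A : Matrix n n ℂ) :
    Matrix n n ℂ :=
  if h : A.IsHermitian then h.cfc (fun x => if x = 0 then 0 else Real.log x) else 0

/-- matrix exponential -/
noncomputable def mexp {n : Type*} [Fintype n] [DecidableEq n] (A : Matrix n n ℂ) :
    Matrix n n ℂ :=
  NormedSpace.exp A

/-- Frobenius (Hilbert–Schmidt) norm `‖X‖₂ = (Tr (Xᴴ X))^(1/2)` -/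
noncomputable def frob {n : Type*} [Fintype n] [DecidableEq n] (X : Matrix n n ℂ) : ℝ :=
  Real.sqrt (Matrix.trace (Xᴴ * X)).re

/-- trace norm `‖X‖₁ = Tr √(Xᴴ X)` -/
noncomputable def trNorm {n : Type*} [Fintype n] [DecidableEq n] (X : Matrix n n ℂ) : ℝ :=
  (Matrix.trace (msqrt (Xᴴ * X))).re

/-- relative entropy `S(ρ‖σ) = Tr (ρ (log ρ − log σ))` -/
noncomputable def relEnt {n : Type*} [Fintype n] [DecidableEq n]
    (rho sigma : Matrix n n ℂ) : ℝ :=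
  (Matrix.trace (rho * (mlog rho - mlog sigma))).re

/-- relative entropy with logarithms taken on the support -/
noncomputable def relEnt0 {n : Type*} [Fintype n] [DecidableEq n]
    (rho sigma : Matrix n n ℂ) : ℝ :=
  (Matrix.trace (rho * (mlog0 rho - mlog0 sigma))).re

/-- von Neumann entropy `S(τ) = −Tr (τ log τ)` -/
noncomputable def vN {n : Type*} [Fintype n] [DecidableEq n] (rho : Matrix n n ℂ) : ℝ :=
  -(Matrix.trace (rho * mlog rho)).re

section Tripartite

variable {α β γ : Type*} [Fintype α] [DecidableEq α] [Fintype β] [DecidableEq β]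
  [Fintype γ] [DecidableEq γ]

/-- partial trace over the `B` system: `ρ_AC` -/
noncomputable def ptrB (M : Matrix (α × β × γ) (α × β × γ) ℂ) : Matrix (α × γ) (α × γ) ℂ :=
  fun p q => ∑ b : β, M (p.1, b, p.2) (q.1, b, q.2)

/-- partial trace over the `A` system: `ρ_BC` -/
noncomputable def ptrA (M : Matrix (α × β × γ) (α × β × γ) ℂ) : Matrix (β × γ) (β × γ) ℂ :=
  fun p q => ∑ a : α, M (a, p.1, p.2) (a, q.1, q.2)

/-- partial trace over the `A` and `B` systems: `ρ_C` -/
noncomputable def ptrAB (M : Matrix (α × β × γ) (α × β × γ) ℂ) : Matrix γ γ ℂ :=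
  fun c c' => ∑ a : α, ∑ b : β, M (a, b, c) (a, b, c')

/-- embedding `X_AC ↦ X_AC ⊗ I_B` -/
def embAC (X : Matrix (α × γ) (α × γ) ℂ) : Matrix (α × β × γ) (α × β × γ) ℂ :=
  fun p q => if p.2.1 = q.2.1 then X (p.1, p.2.2) (q.1, q.2.2) else 0

/-- embedding `X_BC ↦ I_A ⊗ X_BC` -/
def embBC (X : Matrix (β × γ) (β × γ) ℂ) : Matrix (α × β × γ) (α × β × γ) ℂ :=
  fun p q => if p.1 = q.1 then X p.2 q.2 else 0

/-- embedding `X_C ↦ I_A ⊗ I_B ⊗ X_C` -/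
def embC (X : Matrix γ γ ℂ) : Matrix (α × β × γ) (α × β × γ) ℂ :=
  fun p q => if p.1 = q.1 ∧ p.2.1 = q.2.1 then X p.2.2 q.2.2 else 0

/-- conditional mutual information `I(A:B|C)_ρ = S(ρ_AC)+S(ρ_BC)−S(ρ_ABC)−S(ρ_C)` -/
noncomputable def cmi (rho : Matrix (α × β × γ) (α × β × γ) ℂ) : ℝ :=
  vN (ptrB rho) + vN (ptrA rho) - vN rho - vN (ptrAB rho)

/-- the operator `exp(log σ_AC + log σ_BC − log σ_C)` -/
noncomputable def sigOp (sigma : Matrix (α × β × γ) (α × β × γ) ℂ) :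
    Matrix (α × β × γ) (α × β × γ) ℂ :=
  mexp (embAC (mlog (ptrB sigma)) + embBC (mlog (ptrA sigma)) - embC (mlog (ptrAB sigma)))

/-- the operator `exp(log ρ_AC + log ρ_BC)` -/
noncomputable def sigOp2 (sigma : Matrix (α × β × γ) (α × β × γ) ℂ) :
    Matrix (α × β × γ) (α × β × γ) ℂ :=
  mexp (embAC (mlog (ptrB sigma)) + embBC (mlog (ptrA sigma)))

end Tripartite

/-!
Applying the Cauchy–Schwarz inequality for `⟨A, B⟩ = Tr (Aᴴ B)` to `(MN)^(2^j)` against itself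
and inducting on `j` gives `|Tr (MN)^(2^j)|² ≤ Tr (MᴴM)^(2^j) · Tr (NNᴴ)^(2^j)`, whence
`Re Tr (AB)^(2^m) ≤ Re Tr A^(2^m) B^(2^m)` for Hermitian `A`, `B`. With `A = exp (X/k)`,
`B = exp (Y/k)` and `k = 2^m` the right side is `Re Tr (exp X exp Y)`, while by the Lie product
formula `(exp (X/k) exp (Y/k))^k → exp (X + Y)`, so the left side tends to `Re Tr exp (X + Y)`.
-/

open Filter Topology

namespace Matrix

variable {n : Type*} [Fintype n] [DecidableEq n]

theorem trace_mul_pow_comm {R : Type*} [CommSemiring R] (P Q : Matrix n n R) (k : ℕ) :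
    trace ((P * Q) ^ k) = trace ((Q * P) ^ k) := by
  cases k with
  | zero => rfl
  | succ k => rw [pow_succ, ← mul_assoc, trace_mul_comm, mul_pow_mul, ← mul_assoc, ← pow_succ']

variable {𝕜 : Type*} [RCLike 𝕜]

theorem norm_trace_conjTranspose_mul_sq_le (M N : Matrix n n 𝕜) :
    ‖trace (Mᴴ * N)‖ ^ 2 ≤ RCLike.re (trace (Mᴴ * M)) * RCLike.re (trace (Nᴴ * N)) := by
  let _ := toMatrixSeminormedAddCommGroup (1 : Matrix n n 𝕜) PosSemidef.one
  let _ := toMatrixInnerProductSpace (1 : Matrix n n 𝕜) PosSemidef.one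
  have h := inner_mul_inner_self_le (𝕜 := 𝕜) M N
  -- the inner product induced by the weight `1` is `⟪x, y⟫ = trace (y * 1 * xᴴ)`
  change ‖trace (N * 1 * Mᴴ)‖ * ‖trace (M * 1 * Nᴴ)‖ ≤
    RCLike.re (trace (M * 1 * Mᴴ)) * RCLike.re (trace (N * 1 * Nᴴ)) at h
  have hconj : trace (M * Nᴴ) = star (trace (Mᴴ * N)) := by
    rw [← trace_conjTranspose, conjTranspose_mul, conjTranspose_conjTranspose, trace_mul_comm]
  simp only [mul_one] at h
  rwa [trace_mul_comm N, trace_mul_comm M Mᴴ, trace_mul_comm N Nᴴ, hconj, norm_star, ← sq] at h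

theorem re_trace_conjTranspose_mul_pow_nonneg (M : Matrix n n 𝕜) (k : ℕ) :
    0 ≤ RCLike.re (trace ((Mᴴ * M) ^ k)) :=
  RCLike.nonneg_iff.mp ((posSemidef_conjTranspose_mul_self M).pow k).trace_nonneg |>.1

private theorem pow_two_pow_succ {R : Type*} [Monoid R] (a : R) (j : ℕ) :
    a ^ 2 ^ (j + 1) = (a * a) ^ 2 ^ j := by
  rw [pow_succ', pow_mul, sq]

theorem norm_trace_mul_pow_two_pow_sq_le (M N : Matrix n n 𝕜) (j : ℕ) :
    ‖trace ((M * N) ^ 2 ^ j)‖ ^ 2 ≤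
      RCLike.re (trace ((Mᴴ * M) ^ 2 ^ j)) * RCLike.re (trace ((N * Nᴴ) ^ 2 ^ j)) := by
  induction j generalizing M N with
  | zero =>
    simp only [pow_zero, pow_one]
    rw [trace_mul_comm Mᴴ M, trace_mul_comm N Nᴴ]
    simpa using norm_trace_conjTranspose_mul_sq_le Mᴴ N
  | succ j ih =>
    have hcycle : trace (((M * N)ᴴ * (M * N)) ^ 2 ^ j) = trace ((Mᴴ * M * (N * Nᴴ)) ^ 2 ^ j) := by
      rw [conjTranspose_mul, mul_assoc, trace_mul_pow_comm]
      simp only [mul_assoc]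
    have hstep := ih (M * N) (M * N)
    rw [trace_mul_pow_comm (M * N) (M * N)ᴴ, hcycle] at hstep
    have hiter := ih (Mᴴ * M) (N * Nᴴ)
    simp only [conjTranspose_mul, conjTranspose_conjTranspose] at hiter
    set t := trace ((Mᴴ * M * (N * Nᴴ)) ^ 2 ^ j)
    calc ‖trace ((M * N) ^ 2 ^ (j + 1))‖ ^ 2 ≤ RCLike.re t ^ 2 := by
          rwa [pow_two_pow_succ, sq (RCLike.re t)]
      _ ≤ ‖t‖ ^ 2 := by
          rw [← sq_abs]
          exact pow_le_pow_left₀ (abs_nonneg _) (RCLike.abs_re_le_norm t) 2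
      _ ≤ _ := by rwa [pow_two_pow_succ, pow_two_pow_succ]

theorem norm_trace_pow_two_pow_succ_le (Z : Matrix n n 𝕜) (j : ℕ) :
    ‖trace (Z ^ 2 ^ (j + 1))‖ ≤ RCLike.re (trace ((Zᴴ * Z) ^ 2 ^ j)) := by
  have h := norm_trace_mul_pow_two_pow_sq_le Z Z j
  rw [trace_mul_pow_comm Z Zᴴ, ← sq (RCLike.re _), ← pow_two_pow_succ] at h
  exact (pow_le_pow_iff_left₀ (norm_nonneg _) (re_trace_conjTranspose_mul_pow_nonneg Z _)
    two_ne_zero).mp h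

theorem re_trace_mul_pow_two_pow_le {A B : Matrix n n 𝕜} (hA : A.IsHermitian)
    (hB : B.IsHermitian) (m : ℕ) :
    RCLike.re (trace ((A * B) ^ 2 ^ m)) ≤ RCLike.re (trace (A ^ 2 ^ m * B ^ 2 ^ m)) := by
  induction m generalizing A B with
  | zero => simp
  | succ m ih =>
    have hcycle : trace (((A * B)ᴴ * (A * B)) ^ 2 ^ m) = trace ((A * A * (B * B)) ^ 2 ^ m) := by
      rw [conjTranspose_mul, hA.eq, hB.eq, mul_assoc, trace_mul_pow_comm]
      simp only [mul_assoc]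
    calc RCLike.re (trace ((A * B) ^ 2 ^ (m + 1)))
        ≤ ‖trace ((A * B) ^ 2 ^ (m + 1))‖ := RCLike.re_le_norm _
      _ ≤ RCLike.re (trace ((A * A * (B * B)) ^ 2 ^ m)) :=
          hcycle ▸ norm_trace_pow_two_pow_succ_le (A * B) m
      _ ≤ RCLike.re (trace ((A * A) ^ 2 ^ m * (B * B) ^ 2 ^ m)) :=
          ih (sq A ▸ hA.pow 2) (sq B ▸ hB.pow 2)
      _ = RCLike.re (trace (A ^ 2 ^ (m + 1) * B ^ 2 ^ (m + 1))) := by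
          rw [pow_two_pow_succ, pow_two_pow_succ]

end Matrix

theorem norm_pow_sub_pow_le {R : Type*} [SeminormedRing R] [NormOneClass R] {u v : R} {r : ℝ}
    (hu : ‖u‖ ≤ r) (hv : ‖v‖ ≤ r) (k : ℕ) :
    ‖u ^ k - v ^ k‖ ≤ k * r ^ (k - 1) * ‖u - v‖ := by
  induction k with
  | zero => simp
  | succ k ih =>
    have hr : 0 ≤ r := (norm_nonneg u).trans hu
    have hpow : (k : ℝ) * r ^ (k - 1) * r = k * r ^ k := by
      cases k <;> simp [pow_succ, mul_assoc]
    calc ‖u ^ (k + 1) - v ^ (k + 1)‖ = ‖u ^ k * (u - v) + (u ^ k - v ^ k) * v‖ := by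
          congr 1; noncomm_ring
      _ ≤ ‖u‖ ^ k * ‖u - v‖ + k * r ^ (k - 1) * ‖u - v‖ * ‖v‖ := by
          refine (norm_add_le _ _).trans (add_le_add ?_ ?_)
          · exact (norm_mul_le _ _).trans (by gcongr; exact norm_pow_le u k)
          · exact (norm_mul_le _ _).trans (by gcongr)
      _ ≤ r ^ k * ‖u - v‖ + k * r ^ (k - 1) * ‖u - v‖ * r := by gcongr
      _ = (k + 1 : ℕ) * r ^ (k + 1 - 1) * ‖u - v‖ := by
          rw [Nat.add_sub_cancel, mul_right_comm _ ‖u - v‖, hpow]; push_cast; ring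

namespace NormedSpace

variable {𝔸 : Type*} [NormedRing 𝔸] [NormedAlgebra ℝ 𝔸]

theorem norm_exp_le [NormOneClass 𝔸] (x : 𝔸) : ‖exp x‖ ≤ Real.exp ‖x‖ := by
  rw [exp_eq_tsum ℝ, Real.exp_eq_exp_ℝ, exp_eq_tsum ℝ]
  refine (norm_tsum_le_tsum_norm (norm_expSeries_summable' x)).trans
    ((norm_expSeries_summable' x).tsum_le_tsum (fun k => ?_) (expSeries_summable' (𝕂 := ℝ) ‖x‖))
  rw [norm_smul, Real.norm_of_nonneg (by positivity), smul_eq_mul]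
  gcongr
  exact norm_pow_le x k

theorem isLittleO_exp_smul_mul_exp_smul_sub_exp_smul_add [CompleteSpace 𝔸] (x y : 𝔸) :
    (fun t : ℝ => exp (t • x) * exp (t • y) - exp (t • (x + y))) =o[𝓝 0] fun t => t := by
  have hderiv : HasDerivAt (fun t : ℝ => exp (t • x) * exp (t • y) - exp (t • (x + y))) 0 0 := by
    simpa using ((hasDerivAt_exp_smul_const x (0 : ℝ)).fun_mul
      (hasDerivAt_exp_smul_const y (0 : ℝ))).fun_sub (hasDerivAt_exp_smul_const (x + y) (0 : ℝ))
  simpa using hasDerivAt_iff_isLittleO_nhds_zero.mp hderiv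

theorem lie_product_formula [CompleteSpace 𝔸] [NormOneClass 𝔸] (x y : 𝔸) :
    Tendsto (fun k : ℕ => (exp ((k : ℝ)⁻¹ • x) * exp ((k : ℝ)⁻¹ • y)) ^ k) atTop
      (𝓝 (exp (x + y))) := by
  set s := ‖x‖ + ‖y‖
  set f := fun t : ℝ => exp (t • x) * exp (t • y) - exp (t • (x + y))
  have hf : Tendsto (fun k : ℕ => (k : ℝ) * ‖f (k : ℝ)⁻¹‖) atTop (𝓝 0) := by
    have := ((isLittleO_exp_smul_mul_exp_smul_sub_exp_smul_add x y).comp_tendsto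
      tendsto_inv_atTop_nhds_zero_nat).norm_left.tendsto_div_nhds_zero
    simpa only [Function.comp_apply, div_inv_eq_mul, mul_comm] using this
  rw [← tendsto_sub_nhds_zero_iff]
  refine squeeze_zero_norm' ?_ (by simpa using hf.const_mul (Real.exp s))
  filter_upwards [eventually_ne_atTop 0] with k hk
  set R := Real.exp ((k : ℝ)⁻¹ * s)
  have hR : 1 ≤ R := Real.one_le_exp (by positivity)
  have hRk : R ^ k = Real.exp s := by
    rw [← Real.exp_nat_mul, mul_inv_cancel_left₀ (Nat.cast_ne_zero.mpr hk)]
  have hu : ‖exp ((k : ℝ)⁻¹ • x) * exp ((k : ℝ)⁻¹ • y)‖ ≤ R := by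
    refine (norm_mul_le _ _).trans ((mul_le_mul (norm_exp_le _) (norm_exp_le _) (norm_nonneg _)
      (Real.exp_pos _).le).trans_eq ?_)
    rw [← Real.exp_add, norm_smul, norm_smul, Real.norm_of_nonneg (by positivity), ← mul_add]
  have hv : ‖exp ((k : ℝ)⁻¹ • (x + y))‖ ≤ R := by
    refine (norm_exp_le _).trans (Real.exp_le_exp.mpr ?_)
    rw [norm_smul, Real.norm_of_nonneg (by positivity)]
    gcongr
    exact norm_add_le x y
  have hexp : exp (x + y) = exp ((k : ℝ)⁻¹ • (x + y)) ^ k := by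
    -- `exp_nsmul` is stated for normed `ℚ`-algebras
    let _ : NormedAlgebra ℚ 𝔸 := NormedAlgebra.restrictScalars ℚ ℝ 𝔸
    rw [← exp_nsmul, ← Nat.cast_smul_eq_nsmul ℝ, smul_inv_smul₀ (Nat.cast_ne_zero.mpr hk)]
  calc ‖(exp ((k : ℝ)⁻¹ • x) * exp ((k : ℝ)⁻¹ • y)) ^ k - exp (x + y)‖
      ≤ k * R ^ (k - 1) * ‖f (k : ℝ)⁻¹‖ := hexp ▸ norm_pow_sub_pow_le hu hv k
    _ ≤ k * R ^ k * ‖f (k : ℝ)⁻¹‖ := by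
        gcongr
        exact Nat.sub_le k 1
    _ = Real.exp s * (k * ‖f (k : ℝ)⁻¹‖) := by rw [hRk]; ring

end NormedSpace

open scoped Matrix.Norms.Operator in
theorem Matrix.lie_product_formula {n 𝕜 : Type*} [Fintype n] [DecidableEq n] [RCLike 𝕜]
    (X Y : Matrix n n 𝕜) :
    Tendsto (fun k : ℕ => (NormedSpace.exp ((k : ℝ)⁻¹ • X) * NormedSpace.exp ((k : ℝ)⁻¹ • Y)) ^ k)
      atTop (𝓝 (NormedSpace.exp (X + Y))) := by
  cases isEmpty_or_nonempty n
  · exact tendsto_const_nhds.congr fun _ => Subsingleton.elim _ _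
  · exact NormedSpace.lie_product_formula X Y

theorem golden_thompson {n : Type*} [Fintype n] [DecidableEq n]
    (X Y : Matrix n n ℂ) (hX : X.IsHermitian) (hY : Y.IsHermitian) :
    (Matrix.trace (mexp (X + Y))).re ≤ (Matrix.trace (mexp X * mexp Y)).re := by
  unfold mexp
  have hlim := (Matrix.lie_product_formula X Y).comp (tendsto_pow_atTop_atTop_of_one_lt one_lt_two)
  refine le_of_tendsto' ((Complex.continuous_re.comp continuous_id.matrix_trace).tendsto _ |>.comp
    hlim) fun m => ?_
  have hpow (Z : Matrix n n ℂ) :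
      NormedSpace.exp (((2 ^ m : ℕ) : ℝ)⁻¹ • Z) ^ 2 ^ m = NormedSpace.exp Z := by
    rw [← Matrix.exp_nsmul, ← Nat.cast_smul_eq_nsmul ℝ, smul_inv_smul₀ (by positivity)]
  rw [← hpow X, ← hpow Y]
  exact Matrix.re_trace_mul_pow_two_pow_le (hX.smul (IsSelfAdjoint.all _)).exp
    (hY.smul (IsSelfAdjoint.all _)).exp m
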